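/- arXiv:1703.04008 — 2 statements merged into one kernel-verified Lean document; each statement's English description precedes it below -/
import Mathlib

section
/- Let P^t (t ≥ 0) be a Markov semigroup on (X, 𝓑), h > 0, and suppose π_h is an invariant probability measure for P^h. If ‖π_h P^δ − π_h‖_TV → 0 as δ → 0⁺, then π_h is invariant for P^t for every t > 0. -/
/-!
Write `t = s + δ` with `s` a positive rational multiple of `h`. Then
`π_h P^t = (π_h P^s) P^δ = π_h P^δ`, and `δ` can be made arbitrarily small. So
`δ ↦ ‖π_h P^δ − π_h‖_TV`, which tends to `0` at `0⁺`, takes the value `‖π_h P^t − π_h‖_TV`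
at points arbitrarily close to `0⁺`.
-/

open MeasureTheory ENNReal Filter Topology
noncomputable section

variable {X : Type*} [MeasurableSpace X]

/-- total variation distance (sup over measurable sets convention). -/
def tvDist (μ ν : Measure X) : ℝ :=
  ⨆ A : {s : Set X // MeasurableSet s}, |(μ A).toReal - (ν A).toReal|

lemma abs_toReal_sub_le_tvDist (μ ν : Measure X) [IsFiniteMeasure μ] [IsFiniteMeasure ν]
    {A : Set X} (hA : MeasurableSet A) :
    |(μ A).toReal - (ν A).toReal| ≤ tvDist μ ν := by
  refine le_ciSup (f := fun A : {s : Set X // MeasurableSet s} =>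
    |(μ A).toReal - (ν A).toReal|) ⟨max (μ.real .univ) (ν.real .univ), ?_⟩ ⟨A, hA⟩
  rintro _ ⟨B, rfl⟩
  exact abs_sub_le_of_nonneg_of_le toReal_nonneg (le_max_of_le_left (measureReal_mono (by simp)))
    toReal_nonneg (le_max_of_le_right (measureReal_mono (by simp)))

lemma eq_of_tvDist_eq_zero {μ ν : Measure X} [IsFiniteMeasure μ] [IsFiniteMeasure ν]
    (h : tvDist μ ν = 0) : μ = ν := by
  ext A hA
  have hle := abs_toReal_sub_le_tvDist μ ν hA
  rw [h, abs_nonpos_iff, sub_eq_zero] at hle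
  exact (toReal_eq_toReal_iff' (measure_ne_top _ _) (measure_ne_top _ _)).1 hle

open scoped NNReal

lemma exists_nat_div_mul_add_eq {h t ε : ℝ≥0} (hh : 0 < h) (ht : 0 < t) (hε : 0 < ε) :
    ∃ a b : ℕ, 0 < a ∧ 0 < b ∧ ∃ δ ∈ Set.Ioo 0 ε, (a / b : ℝ≥0) * h + δ = t := by
  have hhR : (0 : ℝ) < h := hh
  have hlt : max ((t - ε : ℝ) / h) 0 < t / h :=
    max_lt (div_lt_div_of_pos_right (sub_lt_self _ hε) hhR) (by positivity)
  obtain ⟨q, hlo, hhi⟩ := exists_rat_btwn hlt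
  have hq : 0 < q := by exact_mod_cast (le_max_right _ _).trans_lt hlo
  lift q to ℚ≥0 using hq.le
  replace hlo : (t - ε : ℝ) < (q : ℝ≥0) * h :=
    (div_lt_iff₀ hhR).1 ((le_max_left _ _).trans_lt hlo)
  replace hhi : ((q : ℝ≥0) : ℝ) * h < t := (lt_div_iff₀ hhR).1 hhi
  have hst : (q : ℝ≥0) * h < t := by exact_mod_cast hhi
  have hts : t < q * h + ε := by
    rw [← NNReal.coe_lt_coe]; push_cast; linarith
  refine ⟨q.num, q.den, by simpa using hq, q.den_pos, t - q * h,
    ⟨tsub_pos_of_lt hst, (tsub_lt_iff_left hst.le).2 hts⟩, ?_⟩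
  rw [← NNRat.cast_def]
  exact add_tsub_cancel_of_le hst.le

lemma frequently_nhdsGT_zero_nat_div_mul_add_eq {h t : ℝ≥0} (hh : 0 < h) (ht : 0 < t) :
    ∃ᶠ δ in 𝓝[>] 0, ∃ a b : ℕ, 0 < a ∧ 0 < b ∧ (a / b : ℝ≥0) * h + δ = t :=
  (nhdsGT_basis 0).frequently_iff.2 fun _ hε ↦
    let ⟨a, b, ha, hb, δ, hδ, hsum⟩ := exists_nat_div_mul_add_eq hh ht hε
    ⟨δ, hδ, a, b, ha, hb, hsum⟩

theorem invariant_forall_of_invariant_sample_chain_general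
    (P : NNReal → X → Measure X) (hP : ∀ t x, IsProbabilityMeasure (P t x))
    (hmeas : ∀ t, Measurable (P t))
    -- semigroup property (action on probability measures)
    (hsemi : ∀ (s t : NNReal) (μ : Measure X), IsProbabilityMeasure μ →
      (μ.bind (P s)).bind (P t) = μ.bind (P (s + t)))
    (h : NNReal) (hh : 0 < h)
    (πh : Measure X) [IsProbabilityMeasure πh]
    -- known: `π_h` is invariant for `P^{(a/b) h}` for all positive integers `a, b`
    (hrat : ∀ a b : ℕ, 0 < a → 0 < b → πh.bind (P (((a : NNReal) / (b : NNReal)) * h)) = πh)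
    -- continuity at zero in total variation
    (hcont : Tendsto (fun δ : NNReal => tvDist (πh.bind (P δ)) πh) (𝓝[>] 0) (𝓝 0)) :
    ∀ t : NNReal, 0 < t → πh.bind (P t) = πh := by
  intro t ht
  have := isProbabilityMeasure_bind (m := πh) (hmeas t).aemeasurable (.of_forall (hP t))
  have hfreq : ∃ᶠ δ in 𝓝[>] 0, tvDist (πh.bind (P δ)) πh = tvDist (πh.bind (P t)) πh :=
    (frequently_nhdsGT_zero_nat_div_mul_add_eq hh ht).mono fun δ ⟨a, b, ha, hb, hsum⟩ ↦ by
      rw [← hsum, ← hsemi _ _ _ inferInstance, hrat a b ha hb]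
  exact eq_of_tvDist_eq_zero
    (tendsto_nhds_unique_of_frequently_eq hcont tendsto_const_nhds hfreq).symm

/-- If `π_h` is invariant for the time-`h` kernel of a Markov semigroup, it is invariant for all
rational multiples of `h`, and `‖π_h P^δ − π_h‖_TV → 0` as `δ → 0⁺`, then `π_h` is invariant
for `P^t` for every `t > 0`. -/
theorem invariant_forall_of_invariant_sample_chain
    (P : NNReal → X → Measure X) (hP : ∀ t x, IsProbabilityMeasure (P t x))
    (hmeas : ∀ t, Measurable (P t))
    -- semigroup property (action on probability measures)
    (hsemi : ∀ (s t : NNReal) (μ : Measure X), IsProbabilityMeasure μ →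
      (μ.bind (P s)).bind (P t) = μ.bind (P (s + t)))
    (h : NNReal) (hh : 0 < h)
    (πh : Measure X) [IsProbabilityMeasure πh]
    (hinv : πh.bind (P h) = πh)
    -- known: `π_h` is invariant for `P^{(a/b) h}` for all positive integers `a, b`
    (hrat : ∀ a b : ℕ, 0 < a → 0 < b → πh.bind (P (((a : NNReal) / (b : NNReal)) * h)) = πh)
    -- continuity at zero in total variation
    (hcont : Tendsto (fun δ : NNReal => tvDist (πh.bind (P δ)) πh) (𝓝[>] 0) (𝓝 0)) :
    ∀ t : NNReal, 0 < t → πh.bind (P t) = πh :=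
  invariant_forall_of_invariant_sample_chain_general P hP hmeas hsemi h hh πh hrat hcont
end
end

section
/- With β > 1 and assumptions as in Corollary 2.5 (uniform reference set 𝔠, finite β-moments of return times from μ and from the invariant measure π), for bounded measurable ξ, η the correlation C^{ξ,η}_π(n) = |∫(P^n η)ξ dπ − ∫ P^n η dπ · ∫ ξ dπ| satisfies C^{ξ,η}_π(n) ≤ C ‖ξ‖_∞ ‖η‖_∞ E_π[τ_𝔠^β] n^{−β} for some constant C, provided E_x[τ_𝔠^β] is μ-integrable as a function of the starting point under π. -/
/-!
With `g n x = ∫ η (ω n) ∂Px x`, the correlation is the `π`-covariance of `g n` and `ξ`, so it is at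
most `‖ξ‖_∞ ∫ |g n x - ∫ g n ∂π| ∂π`. The `π`-mean of `g n` is the integral of `η` against the law
`π Pⁿ` of the `n`-th coordinate under `π.bind Px`, while `g n x` integrates `η` against `δₓ Pⁿ`;
hence `|g n x - ∫ g n ∂π| ≤ 2 ‖η‖_∞ ‖δₓ Pⁿ - π Pⁿ‖_TV`, which the contraction bound controls by
`2 ‖η‖_∞ C₀ (E_x[τ^β] + E_π[τ^β]) n^{-β}`. Integrating over `π` and using `E_π[τ^β] ≥ 1`
(return times are at least `1`) absorbs the `x`-dependence into the constant.
-/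
open MeasureTheory ENNReal Filter Topology ProbabilityTheory
noncomputable section

variable {X : Type*} [MeasurableSpace X]

/-- first return time (≥ 1) of a discrete path to the set `𝔠`, valued in `ℕ∞`. -/
def retTime (𝔠 : Set X) (ω : ℕ → X) : ℕ∞ :=
  sInf ((fun n : ℕ => (n : ℕ∞)) '' {n : ℕ | 0 < n ∧ ω n ∈ 𝔠})

/-- `E[τ_𝔠^β]` under a path measure. -/
def retMoment (μpath : Measure (ℕ → X)) (𝔠 : Set X) (β : ℝ) : ℝ≥0∞ :=
  ∫⁻ ω, ((retTime 𝔠 ω : ℝ≥0∞)) ^ β ∂μpath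

open Set

lemma one_le_retMoment {μpath : Measure (ℕ → X)} [IsProbabilityMeasure μpath] (𝔠 : Set X)
    {β : ℝ} (hβ : 0 ≤ β) : 1 ≤ retMoment μpath 𝔠 β := by
  have one_le_retTime : ∀ ω, 1 ≤ retTime 𝔠 ω := fun ω => le_sInf <| by
    rintro _ ⟨m, ⟨hm, -⟩, rfl⟩
    exact Nat.one_le_cast.2 hm
  calc (1 : ℝ≥0∞) = ∫⁻ _, 1 ∂μpath := by simp
    _ ≤ retMoment μpath 𝔠 β := lintegral_mono fun ω =>
      ENNReal.one_rpow β ▸ ENNReal.rpow_le_rpow (by exact_mod_cast one_le_retTime ω) hβ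

section TotalVariation

variable {α : Type*} [MeasurableSpace α] {μ ν : Measure α}

lemma abs_measureReal_sub_le_tvDist [IsFiniteMeasure μ] [IsFiniteMeasure ν] {s : Set α}
    (hs : MeasurableSet s) : |μ.real s - ν.real s| ≤ tvDist μ ν := by
  refine le_ciSup (f := fun A : {s : Set α // MeasurableSet s} => |μ.real A - ν.real A|)
    ⟨μ.real univ + ν.real univ, ?_⟩ ⟨s, hs⟩
  rintro _ ⟨A, rfl⟩
  have hμ := measureReal_mono (μ := μ) (subset_univ (A : Set α))
  have hν := measureReal_mono (μ := ν) (subset_univ (A : Set α))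
  exact abs_sub_le_iff.2 ⟨by linarith [measureReal_nonneg (μ := ν) (s := A)],
    by linarith [measureReal_nonneg (μ := μ) (s := A)]⟩

lemma abs_integral_sub_integral_le_of_le [IsFiniteMeasure μ] (hνμ : ν ≤ μ) {f : α → ℝ}
    (hf : Measurable f) {K : ℝ} (hK : ∀ x, |f x| ≤ K) :
    |∫ x, f x ∂μ - ∫ x, f x ∂ν| ≤ K * (μ.real univ - ν.real univ) := by
  have : IsFiniteMeasure ν := isFiniteMeasure_of_le μ hνμ
  have hbound : ∀ ρ : Measure α, ∀ᵐ x ∂ρ, ‖f x‖ ≤ K := fun ρ => ae_of_all _ hK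
  have hsplit : ∫ x, f x ∂μ = ∫ x, f x ∂(μ - ν) + ∫ x, f x ∂ν := by
    rw [← integral_add_measure (.of_bound hf.aestronglyMeasurable K (hbound _))
      (.of_bound hf.aestronglyMeasurable K (hbound _)), Measure.sub_add_cancel_of_le hνμ]
  have hmass : (μ - ν).real univ = μ.real univ - ν.real univ := by
    simp only [measureReal_def]
    rw [Measure.sub_apply MeasurableSet.univ hνμ,
      ENNReal.toReal_sub_of_le (hνμ univ) (measure_ne_top _ _)]
  rw [hsplit, add_sub_cancel_right, ← Real.norm_eq_abs, ← hmass]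
  exact norm_integral_le_of_norm_le_const (hbound _)

lemma restrict_le_restrict_of_forall_subset {s : Set α} (hs : MeasurableSet s)
    (h : ∀ t, MeasurableSet t → t ⊆ s → ν t ≤ μ t) : ν.restrict s ≤ μ.restrict s :=
  Measure.le_iff.2 fun t ht => by
    rw [Measure.restrict_apply ht, Measure.restrict_apply ht]
    exact h _ (ht.inter hs) inter_subset_right

/-- Split along a Hahn decomposition `s` of `μ - ν`: on `s` and on `sᶜ` one measure dominates the
other, so each half is bounded by `K` times a mass difference, which is at most `tvDist μ ν`. -/
theorem abs_integral_sub_integral_le_two_mul_tvDist [IsProbabilityMeasure μ]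
    [IsProbabilityMeasure ν] {f : α → ℝ} (hf : Measurable f) {K : ℝ} (hK : ∀ x, |f x| ≤ K) :
    |∫ x, f x ∂μ - ∫ x, f x ∂ν| ≤ 2 * K * tvDist μ ν := by
  have hK0 : 0 ≤ K := (abs_nonneg _).trans (hK (nonempty_of_isProbabilityMeasure μ).some)
  obtain ⟨s, hs, hνμ, hμν⟩ := hahn_decomposition μ ν
  have hint : ∀ ρ : Measure α, [IsFiniteMeasure ρ] → Integrable f ρ := fun ρ _ =>
    .of_bound hf.aestronglyMeasurable K (ae_of_all _ hK)
  have hon_s := abs_integral_sub_integral_le_of_le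
    (restrict_le_restrict_of_forall_subset hs hνμ) hf hK
  have hon_sc := abs_integral_sub_integral_le_of_le
    (restrict_le_restrict_of_forall_subset hs.compl hμν) hf hK
  simp only [measureReal_restrict_apply_univ] at hon_s hon_sc
  have htv_s := abs_measureReal_sub_le_tvDist (μ := μ) (ν := ν) hs
  have htv_sc := abs_measureReal_sub_le_tvDist (μ := μ) (ν := ν) hs.compl
  rw [← integral_add_compl hs (hint μ), ← integral_add_compl hs (hint ν)]
  calc |(∫ x in s, f x ∂μ + ∫ x in sᶜ, f x ∂μ) - (∫ x in s, f x ∂ν + ∫ x in sᶜ, f x ∂ν)|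
      ≤ |∫ x in s, f x ∂μ - ∫ x in s, f x ∂ν| + |∫ x in sᶜ, f x ∂ν - ∫ x in sᶜ, f x ∂μ| := by
        rw [← abs_neg (_ - ∫ x in sᶜ, f x ∂μ)]
        exact (abs_add_le _ _).trans_eq' (by ring_nf)
    _ ≤ K * (μ.real s - ν.real s) + K * (ν.real sᶜ - μ.real sᶜ) := add_le_add hon_s hon_sc
    _ ≤ K * tvDist μ ν + K * tvDist μ ν := by
        gcongr
        · exact (le_abs_self _).trans htv_s
        · exact (neg_le_abs _).trans_eq' (by ring) |>.trans htv_sc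
    _ = 2 * K * tvDist μ ν := by ring

end TotalVariation

theorem MeasureTheory.Measure.integral_bind {α β E : Type*} [MeasurableSpace α]
    [MeasurableSpace β] [NormedAddCommGroup E] [NormedSpace ℝ E] {m : Measure α}
    {μ : α → Measure β} (hμ : Measurable μ) {f : β → E} (hf : Integrable f (m.bind μ)) :
    ∫ y, f y ∂(m.bind μ) = ∫ x, ∫ y, f y ∂μ x ∂m := by
  have hcomp : m.bind μ = (Kernel.mk μ hμ ∘ₖ Kernel.const Unit m) () := by
    rw [← Measure.comp_eq_comp_const_apply, Kernel.coe_mk]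
  rw [hcomp] at hf
  rw [hcomp, Kernel.integral_comp hf, Kernel.const_apply]
  rfl

section ProbabilityFamily

variable {α β : Type*} [MeasurableSpace α] [MeasurableSpace β] {P : α → Measure β} {K : ℝ}

lemma integrable_integral_of_abs_le (π : Measure α) [IsFiniteMeasure π] (hP : Measurable P)
    (hP₁ : ∀ x, IsProbabilityMeasure (P x)) {f : β → ℝ} (hf : Measurable f)
    (hK : ∀ y, |f y| ≤ K) : Integrable (fun x => ∫ y, f y ∂P x) π := by
  refine .of_bound (hf.stronglyMeasurable.integral_kernel (κ := Kernel.mk P hP)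
    ).aestronglyMeasurable K (ae_of_all _ fun x => ?_)
  have := hP₁ x
  simpa using norm_integral_le_of_norm_le_const (μ := P x) (f := f) (ae_of_all _ hK)

/-- The `π`-mean of `x ↦ ∫ f ∘ φ ∂P x` is the integral of `f` against `(π.bind P).map φ`. -/
theorem abs_integral_sub_integral_integral_le_two_mul_tvDist {γ : Type*} [MeasurableSpace γ]
    {f : γ → ℝ} {φ : β → γ} (π : Measure α) [IsProbabilityMeasure π] (hP : Measurable P)
    (hP₁ : ∀ x, IsProbabilityMeasure (P x)) (hφ : Measurable φ) (hf : Measurable f)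
    (hK : ∀ y, |f y| ≤ K) (x : α) :
    |∫ ω, f (φ ω) ∂P x - ∫ x', ∫ ω, f (φ ω) ∂P x' ∂π| ≤
      2 * K * tvDist ((P x).map φ) ((π.bind P).map φ) := by
  have : IsProbabilityMeasure (π.bind P) :=
    isProbabilityMeasure_bind hP.aemeasurable (ae_of_all _ hP₁)
  have := hP₁ x
  have := Measure.isProbabilityMeasure_map (μ := P x) hφ.aemeasurable
  have := Measure.isProbabilityMeasure_map (μ := π.bind P) hφ.aemeasurable
  have hmap : ∀ ρ : Measure β, ∫ y, f y ∂ρ.map φ = ∫ ω, f (φ ω) ∂ρ := fun ρ =>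
    integral_map hφ.aemeasurable hf.aestronglyMeasurable
  rw [← Measure.integral_bind (f := fun ω => f (φ ω)) hP
    (.of_bound (hf.comp hφ).aestronglyMeasurable K (ae_of_all _ fun ω => hK (φ ω))), ← hmap, ← hmap]
  exact abs_integral_sub_integral_le_two_mul_tvDist hf hK

end ProbabilityFamily

theorem abs_integral_mul_sub_integral_mul_integral_le {α : Type*} [MeasurableSpace α]
    {μ : Measure α} [IsProbabilityMeasure μ] {g ξ h : α → ℝ} {Cξ : ℝ} (hg : Integrable g μ)
    (hξ : AEStronglyMeasurable ξ μ) (hξC : ∀ x, |ξ x| ≤ Cξ) (hh : Integrable h μ)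
    (hgh : ∀ x, |g x - ∫ y, g y ∂μ| ≤ h x) :
    |∫ x, g x * ξ x ∂μ - (∫ x, g x ∂μ) * ∫ x, ξ x ∂μ| ≤ Cξ * ∫ x, h x ∂μ := by
  have hCξ : 0 ≤ Cξ := (abs_nonneg _).trans (hξC (nonempty_of_isProbabilityMeasure μ).some)
  set a := ∫ y, g y ∂μ
  have hξ_bdd : ∀ᵐ x ∂μ, ‖ξ x‖ ≤ Cξ := ae_of_all _ hξC
  have hcentered : ∫ x, g x * ξ x ∂μ - a * ∫ x, ξ x ∂μ = ∫ x, (g x - a) * ξ x ∂μ := by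
    simp_rw [sub_mul]
    rw [integral_sub (hg.mul_bdd hξ hξ_bdd) ((Integrable.of_bound hξ Cξ hξ_bdd).const_mul a),
      integral_const_mul]
  calc |∫ x, g x * ξ x ∂μ - a * ∫ x, ξ x ∂μ|
      ≤ ∫ x, |(g x - a) * ξ x| ∂μ := hcentered ▸ abs_integral_le_integral_abs
    _ ≤ ∫ x, Cξ * h x ∂μ := integral_mono_of_nonneg (ae_of_all _ fun _ => abs_nonneg _)
        (hh.const_mul Cξ) (ae_of_all _ fun x => by
          show |(g x - a) * ξ x| ≤ Cξ * h x
          rw [abs_mul, mul_comm]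
          exact mul_le_mul (hξC x) (hgh x) (abs_nonneg _) hCξ)
    _ = Cξ * ∫ x, h x ∂μ := integral_const_mul _ _

theorem polynomial_decay_of_correlation_general
    (Px : X → Measure (ℕ → X)) (hPx : ∀ x, IsProbabilityMeasure (Px x))
    (hmeasPx : Measurable Px)
    (𝔠 : Set X) (β : ℝ) (hβ : 1 < β)
    (π : Measure X) [IsProbabilityMeasure π]
    -- finite return-time moment from the invariant measure
    (hπmom : retMoment (π.bind Px) 𝔠 β < ⊤)
    -- the quantitative contraction bound (Corollary 2.5)
    (C₀ : ℝ) (hC₀ : 0 < C₀)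
    (hcontr : ∀ (x : X) (n : ℕ), 0 < n →
      (n : ℝ) ^ β * tvDist ((Px x).map (fun ω => ω n))
          (Measure.map (fun ω => ω n) (π.bind Px)) ≤
        C₀ * ((retMoment (Px x) 𝔠 β).toReal + (retMoment (π.bind Px) 𝔠 β).toReal))
    -- `π`-integrability of the pointwise return-time moments
    (hint : Integrable (fun x => (retMoment (Px x) 𝔠 β).toReal) π)
    (ξ η : X → ℝ) (hξ : Measurable ξ) (hη : Measurable η)
    (Cξ Cη : ℝ) (hCξ : ∀ x, |ξ x| ≤ Cξ) (hCη : ∀ x, |η x| ≤ Cη) :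
    ∃ C : ℝ, 0 < C ∧ ∀ n : ℕ, 0 < n →
      |(∫ x, (∫ ω, η (ω n) ∂(Px x)) * ξ x ∂π) -
          (∫ x, (∫ ω, η (ω n) ∂(Px x)) ∂π) * (∫ x, ξ x ∂π)| ≤
        C * Cξ * Cη * (retMoment (π.bind Px) 𝔠 β).toReal * (n : ℝ) ^ (-β) := by
  obtain ⟨x₀⟩ := nonempty_of_isProbabilityMeasure π
  have hCξ0 : 0 ≤ Cξ := (abs_nonneg _).trans (hCξ x₀)
  have hCη0 : 0 ≤ Cη := (abs_nonneg _).trans (hCη x₀)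
  have : IsProbabilityMeasure (π.bind Px) :=
    isProbabilityMeasure_bind hmeasPx.aemeasurable (ae_of_all _ hPx)
  set M : X → ℝ := fun x => (retMoment (Px x) 𝔠 β).toReal
  set Mπ := (retMoment (π.bind Px) 𝔠 β).toReal
  have hMπ : 1 ≤ Mπ := by
    simpa using ENNReal.toReal_mono hπmom.ne (one_le_retMoment 𝔠 (zero_le_one.trans hβ.le))
  have hI : 0 ≤ ∫ x, M x ∂π := integral_nonneg fun _ => ENNReal.toReal_nonneg
  refine ⟨2 * C₀ * (∫ x, M x ∂π + Mπ), mul_pos (by positivity) (by linarith), fun n hn => ?_⟩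
  have hdev (x : X) : |∫ ω, η (ω n) ∂Px x - ∫ x', ∫ ω, η (ω n) ∂Px x' ∂π| ≤
      2 * Cη * C₀ * (n : ℝ) ^ (-β) * (M x + Mπ) := by
    calc _ ≤ 2 * Cη * tvDist ((Px x).map (· n)) ((π.bind Px).map (· n)) :=
          abs_integral_sub_integral_integral_le_two_mul_tvDist π hmeasPx hPx
            (measurable_pi_apply n) hη hCη x
      _ ≤ 2 * Cη * (C₀ * (M x + Mπ) / (n : ℝ) ^ β) := by
          gcongr
          exact (le_div_iff₀' (by positivity)).2 (hcontr x n hn)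
      _ = 2 * Cη * C₀ * (n : ℝ) ^ (-β) * (M x + Mπ) := by
          rw [Real.rpow_neg (Nat.cast_nonneg n)]
          ring
  have hcoef : 0 ≤ 2 * C₀ * (∫ x, M x ∂π + Mπ) * Cξ * Cη * (n : ℝ) ^ (-β) :=
    mul_nonneg (mul_nonneg (mul_nonneg (mul_nonneg (by positivity) (by linarith)) hCξ0) hCη0)
      (by positivity)
  calc _ ≤ Cξ * ∫ x, 2 * Cη * C₀ * (n : ℝ) ^ (-β) * (M x + Mπ) ∂π :=
        abs_integral_mul_sub_integral_mul_integral_le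
          (integrable_integral_of_abs_le π hmeasPx hPx (hη.comp (measurable_pi_apply n))
            fun ω => hCη (ω n))
          hξ.aestronglyMeasurable hCξ ((hint.add (integrable_const Mπ)).const_mul _) hdev
    _ = 2 * C₀ * (∫ x, M x ∂π + Mπ) * Cξ * Cη * (n : ℝ) ^ (-β) := by
        rw [integral_const_mul, integral_add hint (integrable_const Mπ), integral_const,
          probReal_univ, one_smul]
        ring
    _ ≤ 2 * C₀ * (∫ x, M x ∂π + Mπ) * Cξ * Cη * Mπ * (n : ℝ) ^ (-β) := by
        rw [mul_right_comm _ Mπ]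
        exact le_mul_of_one_le_right hcoef hMπ

/-- Polynomial decay of correlations for bounded observables under the invariant measure `π`:
assuming the quantitative contraction bound of Corollary 2.5 and `π`-integrability of
`x ↦ E_x[τ_𝔠^β]`, the correlation satisfies
`C^{ξ,η}_π(n) ≤ C ‖ξ‖_∞ ‖η‖_∞ E_π[τ_𝔠^β] n^{-β}`. -/
theorem polynomial_decay_of_correlation
    (Px : X → Measure (ℕ → X)) (hPx : ∀ x, IsProbabilityMeasure (Px x))
    (hmeasPx : Measurable Px)
    (𝔠 : Set X) (h𝔠 : MeasurableSet 𝔠) (β : ℝ) (hβ : 1 < β)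
    (π : Measure X) [IsProbabilityMeasure π]
    -- `π` is invariant
    (hinv : ∀ n : ℕ, Measure.map (fun ω => ω n) (π.bind Px) = π)
    -- finite return-time moment from the invariant measure
    (hπmom : retMoment (π.bind Px) 𝔠 β < ⊤)
    -- the quantitative contraction bound (Corollary 2.5)
    (C₀ : ℝ) (hC₀ : 0 < C₀)
    (hcontr : ∀ (x : X) (n : ℕ), 0 < n →
      (n : ℝ) ^ β * tvDist ((Px x).map (fun ω => ω n))
          (Measure.map (fun ω => ω n) (π.bind Px)) ≤
        C₀ * ((retMoment (Px x) 𝔠 β).toReal + (retMoment (π.bind Px) 𝔠 β).toReal))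
    -- `π`-integrability of the pointwise return-time moments
    (hint : Integrable (fun x => (retMoment (Px x) 𝔠 β).toReal) π)
    (ξ η : X → ℝ) (hξ : Measurable ξ) (hη : Measurable η)
    (Cξ Cη : ℝ) (hCξ : ∀ x, |ξ x| ≤ Cξ) (hCη : ∀ x, |η x| ≤ Cη) :
    ∃ C : ℝ, 0 < C ∧ ∀ n : ℕ, 0 < n →
      |(∫ x, (∫ ω, η (ω n) ∂(Px x)) * ξ x ∂π) -
          (∫ x, (∫ ω, η (ω n) ∂(Px x)) ∂π) * (∫ x, ξ x ∂π)| ≤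
        C * Cξ * Cη * (retMoment (π.bind Px) 𝔠 β).toReal * (n : ℝ) ^ (-β) :=
  polynomial_decay_of_correlation_general Px hPx hmeasPx 𝔠 β hβ π hπmom C₀ hC₀ hcontr hint ξ η hξ hη
    Cξ Cη hCξ hCη
end
end
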